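/- For m ≥ 1 and n ≥ k ≥ 0, the degenerate Whitney number satisfies W_{m,r}(n,k|λ) = (n!/(k! m^k)) ∑_{l=0}^k C(k,l)(-1)^{k-l} binom_λ(ml+r, n), where binom_λ(y,n) = y(y-λ)⋯(y-(n-1)λ)/n!. For n < k, the alternating sum ∑_{l=0}^k C(k,l)(-1)^{k-l} binom_λ(ml+r,n) vanishes. -/

import Mathlib

open Finset PowerSeries

/-- The λ-binomial coefficient `binom_λ(y,n) = y(y-λ)⋯(y-(n-1)λ)/n!`. -/
noncomputable def dbinom (lam y : ℝ) (n : ℕ) : ℝ :=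
  (∏ i ∈ range n, (y - i * lam)) / n.factorial

/-- `(1 + λt)^{y/λ}` as a formal power series: `∑_n binom_λ(y,n) t^n`. -/
noncomputable def degExp (lam y : ℝ) : PowerSeries ℝ :=
  PowerSeries.mk fun n => dbinom lam y n

/-!
Since `binom_λ(y, ·)` satisfies the λ-Chu–Vandermonde identity, `y ↦ (1 + λt)^{y/λ}` turns sums
into products, so expanding `(1 + λt)^{r/λ}((1 + λt)^{m/λ} - 1)^k` by the binomial theorem gives
`∑_l C(k,l)(-1)^{k-l}(1 + λt)^{(ml+r)/λ}`; comparing coefficients of `t^n` gives the formula. For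
`n < k` the coefficient vanishes because `(1 + λt)^{m/λ} - 1` has no constant term.
-/

section DegenerateBinomial

variable (lam : ℝ)

@[simp]
lemma dbinom_zero (y : ℝ) : dbinom lam y 0 = 1 := by
  simp [dbinom]

lemma succ_mul_dbinom_succ (y : ℝ) (n : ℕ) :
    (n + 1 : ℝ) * dbinom lam y (n + 1) = dbinom lam y n * (y - n * lam) := by
  simp only [dbinom, prod_range_succ, Nat.factorial_succ, Nat.cast_mul, Nat.cast_succ]
  generalize ∏ i ∈ range n, (y - i * lam) = P
  field_simp

lemma dbinom_add (x y : ℝ) (n : ℕ) :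
    dbinom lam (x + y) n = ∑ p ∈ antidiagonal n, dbinom lam x p.1 * dbinom lam y p.2 := by
  induction n with
  | zero => simp
  | succ n ih =>
    -- Multiply by `n + 1 = i + j` and lower the index in each factor by the recurrence.
    refine mul_left_cancel₀ (n.cast_add_one_ne_zero (R := ℝ)) ?_
    have weight : ∀ p ∈ antidiagonal (n + 1),
        (n + 1 : ℝ) * (dbinom lam x p.1 * dbinom lam y p.2) =
          (p.1 : ℝ) * dbinom lam x p.1 * dbinom lam y p.2 +
            dbinom lam x p.1 * ((p.2 : ℝ) * dbinom lam y p.2) := by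
      intro p hp
      have hp' : (n + 1 : ℝ) = p.1 + p.2 := by
        exact_mod_cast (HasAntidiagonal.mem_antidiagonal.mp hp).symm
      rw [hp']
      ring
    rw [succ_mul_dbinom_succ, ih, mul_sum, sum_congr rfl weight, sum_add_distrib,
      Nat.sum_antidiagonal_succ, Nat.sum_antidiagonal_succ', sum_mul]
    simp only [Nat.cast_zero, zero_mul, mul_zero, zero_add, Nat.cast_succ,
      succ_mul_dbinom_succ, ← sum_add_distrib]
    refine sum_congr rfl fun p hp => ?_
    rw [HasAntidiagonal.mem_antidiagonal] at hp
    rw [← hp]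
    push_cast
    ring

lemma degExp_add (x y : ℝ) : degExp lam (x + y) = degExp lam x * degExp lam y := by
  ext n
  simp only [degExp, coeff_mul, coeff_mk, dbinom_add]

lemma degExp_zero : degExp lam 0 = 1 := by
  ext n
  cases n with
  | zero => simp [degExp]
  | succ n => simp [degExp, dbinom, prod_range_succ']

lemma degExp_pow (x : ℝ) (l : ℕ) : degExp lam x ^ l = degExp lam (x * l) := by
  induction l with
  | zero => simp [degExp_zero]
  | succ l ih => rw [pow_succ, ih, ← degExp_add]; push_cast; ring_nf

lemma constantCoeff_degExp (x : ℝ) : constantCoeff (degExp lam x) = 1 := by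
  simp [degExp, ← coeff_zero_eq_constantCoeff_apply]

lemma degExp_mul_degExp_sub_one_pow (a b : ℝ) (k : ℕ) :
    degExp lam b * (degExp lam a - 1) ^ k =
      ∑ l ∈ range (k + 1), ((k.choose l : ℝ) * (-1) ^ (k - l)) • degExp lam (a * l + b) := by
  rw [sub_eq_add_neg, add_pow, mul_sum]
  refine sum_congr rfl fun l _ => ?_
  rw [degExp_pow, add_comm _ b, degExp_add, Algebra.smul_def]
  simp only [map_mul, map_pow, map_neg, map_one, map_natCast]
  ring

lemma coeff_degExp_mul_degExp_sub_one_pow (a b : ℝ) (k n : ℕ) :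
    coeff n (degExp lam b * (degExp lam a - 1) ^ k) =
      ∑ l ∈ range (k + 1), (k.choose l : ℝ) * (-1) ^ (k - l) * dbinom lam (a * l + b) n := by
  rw [degExp_mul_degExp_sub_one_pow, map_sum]
  simp [degExp]

lemma coeff_degExp_mul_degExp_sub_one_pow_of_lt (a b : ℝ) {k n : ℕ} (hnk : n < k) :
    coeff n (degExp lam b * (degExp lam a - 1) ^ k) = 0 := by
  have hX : X ∣ degExp lam a - 1 := by
    simp [X_dvd_iff, constantCoeff_degExp]
  exact X_pow_dvd_iff.mp ((pow_dvd_pow_of_dvd hX k).mul_left _) n hnk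

end DegenerateBinomial

theorem stmt13_general (lam : ℝ) (m r k : ℕ) (hm : 1 ≤ m) (W : ℕ → ℝ)
    (hW : degExp lam r * (degExp lam m - 1) ^ k =
      ((m : ℝ) ^ k * k.factorial) • PowerSeries.mk (fun n => W n / n.factorial)) :
    ∀ n : ℕ,
      (k ≤ n → W n = (n.factorial : ℝ) / ((k.factorial : ℝ) * (m : ℝ) ^ k) *
        ∑ l ∈ range (k + 1), (k.choose l : ℝ) * (-1) ^ (k - l) * dbinom lam (m * l + r) n) ∧
      (n < k → ∑ l ∈ range (k + 1),
        (k.choose l : ℝ) * (-1) ^ (k - l) * dbinom lam (m * l + r) n = 0) := by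
  intro n
  have hcoeff := congrArg (coeff n) hW
  rw [coeff_degExp_mul_degExp_sub_one_pow] at hcoeff
  refine ⟨fun _ => ?_, fun hnk => ?_⟩
  · have hm0 : (m : ℝ) ≠ 0 := Nat.cast_ne_zero.mpr (by omega)
    rw [hcoeff, coeff_smul, coeff_mk, smul_eq_mul]
    field_simp
  · rw [hcoeff, ← hW, coeff_degExp_mul_degExp_sub_one_pow_of_lt lam _ _ hnk]

/-- If `W` is the sequence of degenerate Whitney numbers `W_{m,r}(·,k|λ)`, defined by
`(1/(m^k k!))(1+λt)^{r/λ}((1+λt)^{m/λ}-1)^k = ∑_n W_n t^n/n!`, then for `n ≥ k`,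
`W n = (n!/(k! m^k)) ∑_{l=0}^k C(k,l)(-1)^{k-l} binom_λ(ml+r,n)`, while for `n < k`
the alternating sum `∑_{l=0}^k C(k,l)(-1)^{k-l} binom_λ(ml+r,n)` vanishes. -/
theorem stmt13 (lam : ℝ) (hlam : lam ≠ 0) (m r k : ℕ) (hm : 1 ≤ m) (W : ℕ → ℝ)
    (hW : degExp lam r * (degExp lam m - 1) ^ k =
      ((m : ℝ) ^ k * k.factorial) • PowerSeries.mk (fun n => W n / n.factorial)) :
    ∀ n : ℕ,
      (k ≤ n → W n = (n.factorial : ℝ) / ((k.factorial : ℝ) * (m : ℝ) ^ k) *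
        ∑ l ∈ range (k + 1), (k.choose l : ℝ) * (-1) ^ (k - l) * dbinom lam (m * l + r) n) ∧
      (n < k → ∑ l ∈ range (k + 1),
        (k.choose l : ℝ) * (-1) ^ (k - l) * dbinom lam (m * l + r) n = 0) :=
  stmt13_general lam m r k hm W hW
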